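/- arXiv:1206.4853 — 2 statements merged into one kernel-verified Lean document; each statement's English description precedes it below -/
import Mathlib

section
/- For every d ≥ 2 there is a constant C_d, depending only on d, such that for all ε ∈ (0,1) and all N ∈ ℕ, the Lebesgue measure of the set { α ∈ 𝕋^d : there exists k ∈ ℤ^d∖{0} with |k|² < ε^{(d+4)/(d−1)} N^{2/d} and |k|^{(d+1)/2} |{k,α}| < ε^{−d/4} N^{−(d−1)/(2d)} } is at most C_d ε. -/
open MeasureTheory Filter Pointwise
open scoped ENNReal RealInnerProductSpace Real

noncomputable section

abbrev Torus (d : ℕ) := Fin d → AddCircle (1 : ℝ)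

def torusProj {d : ℕ} (v : EuclideanSpace ℝ (Fin d)) : Torus d :=
  fun i => (v i : AddCircle (1 : ℝ))

def suppFn {d : ℕ} (C : Set (EuclideanSpace ℝ (Fin d))) (t : EuclideanSpace ℝ (Fin d)) : ℝ :=
  sSup ((fun x => (inner ℝ t x : ℝ)) '' C)

structure StrictlyConvexAnalyticBody (d : ℕ) where
  carrier : Set (EuclideanSpace ℝ (Fin d))
  isCompact : IsCompact carrier
  convex : Convex ℝ carrier
  nonemptyInterior : (interior carrier).Nonempty
  strictConvex : StrictConvex ℝ carrier
  analyticSupport : AnalyticOnNhd ℝ (suppFn carrier) {(0 : EuclideanSpace ℝ (Fin d))}ᶜ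
  posCurvature : ∀ t w : EuclideanSpace ℝ (Fin d), t ≠ 0 → w ≠ 0 → (inner ℝ t w : ℝ) = 0 →
    0 < iteratedDeriv 2 (fun s : ℝ => suppFn carrier (t + s • w)) 0

def discrepancy (d : ℕ) (C : Set (EuclideanSpace ℝ (Fin d))) (r : ℝ)
    (α x : Torus d) (N : ℕ) : ℝ :=
  (∑ n ∈ Finset.range N,
    Set.indicator (torusProj '' (r • C)) (fun _ => (1:ℝ)) (x + n • α))
    - N * (volume (r • C)).toReal

def lamMeasure (d : ℕ) (a b : ℝ) : Measure (ℝ × Torus d × Torus d) :=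
  ((volume (Set.Icc a b))⁻¹ • volume.restrict (Set.Icc a b)).prod
    ((volume : Measure (Torus d)).prod (volume : Measure (Torus d)))


def cube (d : ℕ) : Set (EuclideanSpace ℝ (Fin d)) := {x | ∀ i, x i ∈ Set.Ico (0:ℝ) 1}

/-- The representative of `t` modulo 1 lying in `(-1/2, 1/2]`. -/
def bracket (t : ℝ) : ℝ := t - ⌈t - 1/2⌉

def znorm {d : ℕ} (k : Fin d → ℤ) : ℝ := Real.sqrt (∑ i, ((k i : ℝ))^2)

def dotZ {d : ℕ} (k : Fin d → ℤ) (x : EuclideanSpace ℝ (Fin d)) : ℝ := ∑ i, (k i : ℝ) * x i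

/-- `c_k(r) = 2 r^{-(d-1)/2} ∫_{C_r} cos(2π(k,x)) dx`. -/
def ckCoeff (d : ℕ) (C : Set (EuclideanSpace ℝ (Fin d))) (r : ℝ) (k : Fin d → ℤ) : ℝ :=
  2 * r ^ (-(((d:ℝ)-1)/2)) * ∫ x in r • C, Real.cos (2 * Real.pi * dotZ k x)

/-- The resonant term `f(r,α,x,N,k)`. -/
def fterm (d : ℕ) (C : Set (EuclideanSpace ℝ (Fin d))) (r : ℝ)
    (α x : EuclideanSpace ℝ (Fin d)) (N : ℕ) (k : Fin d → ℤ) : ℝ :=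
  ckCoeff d C r k *
    Real.cos (2 * Real.pi * dotZ k x + Real.pi * ((N:ℝ)-1) * bracket (dotZ k α)) *
    Real.sin (Real.pi * (N:ℝ) * bracket (dotZ k α)) /
    ((N:ℝ) ^ (((d:ℝ)-1)/(2*(d:ℝ))) * Real.sin (Real.pi * bracket (dotZ k α)))

/-!
For a fixed `k ≠ 0`, the points `α` of the unit cube with `|{k,α}| < δ` have measure `O_d(δ)`:
a shear with determinant `k i₀` (a largest coordinate of `k`) turns `(k,α)` into a coordinate, and
the image lies in a box whose side in that coordinate is covered by `O(d |k i₀|)` intervals of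
length `2δ`. Taking `δ = η |k|^{-(d+1)/2}` and summing over `0 < |k| < R` gives the bound
`O_d(η R^{(d-1)/2})`, since `#{k : |k| < r} = O(r^d)` and halving the radius gains a constant factor.
With `R = ε^{(d+4)/(2(d-1))} N^{1/d}` and `η = ε^{-d/4} N^{-(d-1)/(2d)}` one has
`η R^{(d-1)/2} ≤ ε`.
-/

open Finset

section LatticeSums

variable {d : ℕ}

lemma znorm_nonneg (k : Fin d → ℤ) : 0 ≤ znorm k := Real.sqrt_nonneg _

lemma abs_le_znorm (k : Fin d → ℤ) (i : Fin d) : |(k i : ℝ)| ≤ znorm k := by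
  rw [← Real.sqrt_sq_eq_abs]
  exact Real.sqrt_le_sqrt (single_le_sum (f := fun i => (k i : ℝ) ^ 2)
    (fun i _ => sq_nonneg _) (mem_univ i))

lemma one_le_znorm {k : Fin d → ℤ} (hk : k ≠ 0) : 1 ≤ znorm k := by
  obtain ⟨i, hi⟩ := Function.ne_iff.mp hk
  calc (1 : ℝ) ≤ |(k i : ℝ)| := by exact_mod_cast Int.one_le_abs hi
    _ ≤ znorm k := abs_le_znorm k i

lemma abs_le_floor_of_znorm_le {k : Fin d → ℤ} {R : ℝ} (h : znorm k ≤ R) (i : Fin d) :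
    |k i| ≤ ⌊R⌋ :=
  Int.le_floor.mpr (by push_cast; exact (abs_le_znorm k i).trans h)

def punctLatticeBall (d : ℕ) (R : ℝ) : Finset (Fin d → ℤ) :=
  {k ∈ Fintype.piFinset fun _ => Icc (-⌊R⌋) ⌊R⌋ | k ≠ 0 ∧ znorm k < R}

lemma mem_punctLatticeBall {R : ℝ} {k : Fin d → ℤ} :
    k ∈ punctLatticeBall d R ↔ k ≠ 0 ∧ znorm k < R := by
  refine ⟨fun hk => (mem_filter.mp hk).2, fun hk => mem_filter.mpr ⟨?_, hk⟩⟩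
  exact Fintype.mem_piFinset.mpr fun i =>
    mem_Icc.mpr (abs_le.mp (abs_le_floor_of_znorm_le hk.2.le i))

lemma punctLatticeBall_eq_empty {R : ℝ} (hR : R ≤ 1) : punctLatticeBall d R = ∅ :=
  eq_empty_of_forall_notMem fun _ hk =>
    have hk := mem_punctLatticeBall.mp hk
    (one_le_znorm hk.1).not_gt (hk.2.trans_le hR)

lemma card_punctLatticeBall_le {R : ℝ} (hR : 0 ≤ R) :
    (#(punctLatticeBall d R) : ℝ) ≤ (2 * R + 1) ^ d := by
  have hcard : #(punctLatticeBall d R) ≤ (2 * ⌊R⌋ + 1).toNat ^ d := by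
    refine (card_filter_le _ _).trans (le_of_eq ?_)
    simp only [Fintype.card_piFinset, Int.card_Icc, prod_const, card_univ, Fintype.card_fin]
    congr 2
    ring
  have hfloor : (((2 * ⌊R⌋ + 1).toNat : ℕ) : ℝ) ≤ 2 * R + 1 := by
    rw [← Int.cast_natCast, Int.toNat_of_nonneg (by have := Int.floor_nonneg.mpr hR; omega)]
    push_cast
    linarith [Int.floor_le R]
  calc (#(punctLatticeBall d R) : ℝ) ≤ (((2 * ⌊R⌋ + 1).toNat : ℕ) : ℝ) ^ d := by
        exact_mod_cast hcard
    _ ≤ (2 * R + 1) ^ d := pow_le_pow_left₀ (Nat.cast_nonneg _) hfloor d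

variable {s : ℝ}

/-- The shell `R / 2 ≤ |k| < R` has at most `(3R)^d` points, each contributing at most
`(R/2)^{-s}`. -/
lemma sum_punctLatticeBall_le_half_add (hs : 0 ≤ s) {R : ℝ} (hR : 1 ≤ R) :
    ∑ k ∈ punctLatticeBall d R, znorm k ^ (-s) ≤
      ∑ k ∈ punctLatticeBall d (R / 2), znorm k ^ (-s) +
        3 ^ d * 2 ^ s * R ^ ((d : ℝ) - s) := by
  have hR0 : 0 < R := by linarith
  have hinner : {k ∈ punctLatticeBall d R | znorm k < R / 2} = punctLatticeBall d (R / 2) := by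
    ext k
    simp only [mem_filter, mem_punctLatticeBall]
    exact ⟨fun h => ⟨h.1.1, h.2⟩, fun h => ⟨⟨h.1, by linarith⟩, h.2⟩⟩
  have houter : ∀ k ∈ {k ∈ punctLatticeBall d R | ¬ znorm k < R / 2},
      znorm k ^ (-s) ≤ (R / 2) ^ (-s) := fun k hk =>
    Real.rpow_le_rpow_of_nonpos (by positivity) (not_lt.mp (mem_filter.mp hk).2) (by linarith)
  rw [← sum_filter_add_sum_filter_not _ (fun k => znorm k < R / 2), hinner]
  gcongr
  calc ∑ k ∈ {k ∈ punctLatticeBall d R | ¬ znorm k < R / 2}, znorm k ^ (-s)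
      ≤ #(punctLatticeBall d R) * (R / 2) ^ (-s) := by
        refine (sum_le_card_nsmul _ _ _ houter).trans ?_
        rw [nsmul_eq_mul]
        exact mul_le_mul_of_nonneg_right (by exact_mod_cast card_le_card (filter_subset _ _))
          (by positivity)
    _ ≤ (3 * R) ^ d * (R / 2) ^ (-s) := by
        gcongr
        exact (card_punctLatticeBall_le hR0.le).trans (by gcongr; linarith)
    _ = 3 ^ d * 2 ^ s * R ^ ((d : ℝ) - s) := by
        rw [Real.div_rpow hR0.le zero_le_two, Real.rpow_neg hR0.le, Real.rpow_neg zero_le_two,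
          Real.rpow_sub hR0, Real.rpow_natCast, mul_pow]
        field_simp

lemma exists_sum_punctLatticeBall_rpow_neg_le (hs : 0 ≤ s) (hsd : s < d) :
    ∃ C : ℝ, 0 ≤ C ∧ ∀ R : ℝ, 0 ≤ R →
      ∑ k ∈ punctLatticeBall d R, znorm k ^ (-s) ≤ C * R ^ ((d : ℝ) - s) := by
  set q := (d : ℝ) - s
  have hq : 0 < q := sub_pos.mpr hsd
  have hθ : (2 : ℝ) ^ (-q) < 1 :=
    Real.rpow_lt_one_of_one_lt_of_neg one_lt_two (neg_neg_of_pos hq)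
  set A : ℝ := 3 ^ d * 2 ^ s
  -- `C` solves `C = C * 2^{-q} + A`, which makes the halving step self-improving.
  set C := A / (1 - 2 ^ (-q))
  have hC : 0 ≤ C := div_nonneg (by positivity) (by linarith)
  have hCA : C * 2 ^ (-q) + A = C := by
    have : 1 - (2 : ℝ) ^ (-q) ≠ 0 := by linarith
    simp only [C]; field_simp; ring
  refine ⟨C, hC, fun R hR => ?_⟩
  obtain ⟨n, hn⟩ := pow_unbounded_of_one_lt R one_lt_two
  induction n generalizing R with
  | zero =>
    rw [punctLatticeBall_eq_empty (by simpa using hn.le), sum_empty]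
    positivity
  | succ n ih =>
    rcases le_or_gt R 1 with hR1 | hR1
    · rw [punctLatticeBall_eq_empty hR1, sum_empty]
      positivity
    have hhalf : R / 2 < 2 ^ n := by rw [pow_succ] at hn; linarith
    calc ∑ k ∈ punctLatticeBall d R, znorm k ^ (-s)
        ≤ ∑ k ∈ punctLatticeBall d (R / 2), znorm k ^ (-s) + A * R ^ q :=
          sum_punctLatticeBall_le_half_add hs hR1.le
      _ ≤ C * (R / 2) ^ q + A * R ^ q := by gcongr; exact ih (R / 2) (by positivity) hhalf
      _ = (C * 2 ^ (-q) + A) * R ^ q := by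
          rw [Real.div_rpow hR zero_le_two, Real.rpow_neg zero_le_two]; ring
      _ = C * R ^ q := by rw [hCA]

end LatticeSums

lemma Matrix.det_one_updateRow {n R : Type*} [Fintype n] [DecidableEq n] [CommRing R]
    (i : n) (v : n → R) : ((1 : Matrix n n R).updateRow i v).det = v i := by
  have hv : v = ∑ j, v j • (1 : Matrix n n R) j := by
    ext l
    simp [Matrix.one_apply]
  conv_lhs => rw [hv]
  rw [Matrix.det_updateRow_sum, Matrix.det_one, smul_eq_mul, mul_one]

section CubeMeasure

variable {d : ℕ}

def dotShear (k : Fin d → ℤ) (i : Fin d) :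
    EuclideanSpace ℝ (Fin d) →ₗ[ℝ] EuclideanSpace ℝ (Fin d) :=
  Matrix.toLpLin 2 2 ((1 : Matrix (Fin d) (Fin d) ℝ).updateRow i fun j => (k j : ℝ))

lemma det_dotShear (k : Fin d → ℤ) (i : Fin d) : LinearMap.det (dotShear k i) = k i := by
  rw [dotShear, LinearMap.det_toLpLin, Matrix.det_one_updateRow]

lemma dotShear_apply_self (k : Fin d → ℤ) (i : Fin d) (α : EuclideanSpace ℝ (Fin d)) :
    dotShear k i α i = dotZ k α := by
  simp [dotShear, Matrix.mulVec, dotProduct, dotZ]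

lemma dotShear_apply_of_ne (k : Fin d → ℤ) {i j : Fin d} (h : j ≠ i)
    (α : EuclideanSpace ℝ (Fin d)) : dotShear k i α j = α j := by
  simp [dotShear, h, Matrix.mulVec, Matrix.one_apply, dotProduct]

def cubeWithSide (i : Fin d) (B : Set ℝ) : Set (EuclideanSpace ℝ (Fin d)) :=
  WithLp.ofLp ⁻¹' Set.univ.pi (Function.update (fun _ => Set.Ico 0 1) i B)

lemma volume_cubeWithSide (i : Fin d) {B : Set ℝ} (hB : MeasurableSet B) :
    volume (cubeWithSide i B) = volume B := by
  have hmeas : MeasurableSet (Set.univ.pi (Function.update (fun _ => Set.Ico (0 : ℝ) 1) i B)) :=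
    MeasurableSet.univ_pi fun j => by
      rcases eq_or_ne j i with rfl | hj
      · simpa using hB
      · simp [hj]
  rw [cubeWithSide, (PiLp.volume_preserving_ofLp _).measure_preimage hmeas.nullMeasurableSet,
    volume_pi_pi]
  simp [Function.update_apply, apply_ite volume]

def intNbhd (M : ℤ) (δ : ℝ) : Set ℝ :=
  ⋃ n ∈ Finset.Icc (-M) M, Set.Ioo ((n : ℝ) - δ) (n + δ)

lemma measurableSet_intNbhd (M : ℤ) (δ : ℝ) : MeasurableSet (intNbhd M δ) :=
  (Finset.Icc (-M) M).measurableSet_biUnion fun _ _ => measurableSet_Ioo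

lemma volume_intNbhd_le {M : ℤ} (hM : 0 ≤ M) (δ : ℝ) :
    volume (intNbhd M δ) ≤ ENNReal.ofReal ((2 * M + 1) * (2 * δ)) := by
  have hcard : ((#(Icc (-M) M) : ℕ) : ℝ) = 2 * M + 1 := by
    rw [Int.card_Icc, ← Int.cast_natCast, Int.toNat_of_nonneg (by omega)]
    push_cast; ring
  calc volume (intNbhd M δ)
      ≤ ∑ n ∈ Icc (-M) M, volume (Set.Ioo ((n : ℝ) - δ) (n + δ)) :=
        measure_biUnion_finset_le _ _
    _ = #(Icc (-M) M) * ENNReal.ofReal (2 * δ) := by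
        simp only [Real.volume_Ioo, add_sub_sub_cancel, ← two_mul, sum_const, nsmul_eq_mul]
    _ = ENNReal.ofReal ((2 * M + 1) * (2 * δ)) := by
        rw [← hcard, ENNReal.ofReal_mul (Nat.cast_nonneg _), ENNReal.ofReal_natCast]

lemma mem_intNbhd_of_abs_bracket_lt {M : ℤ} {t δ : ℝ} (ht : |t| ≤ M)
    (hδ : |bracket t| < δ) :
    t ∈ intNbhd M δ := by
  set n := ⌈t - 1 / 2⌉
  have hn₁ : t - 1 / 2 ≤ n := Int.le_ceil _
  have hn₂ : (n : ℝ) < t + 1 / 2 := by linarith [Int.ceil_lt_add_one (t - 1 / 2)]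
  have hlo : -M - 1 < n := by
    have : ((-M - 1 : ℤ) : ℝ) < n := by push_cast; linarith [(abs_le.mp ht).1]
    exact_mod_cast this
  have hhi : n < M + 1 := by
    have : (n : ℝ) < ((M + 1 : ℤ) : ℝ) := by push_cast; linarith [(abs_le.mp ht).2]
    exact_mod_cast this
  have hb := abs_lt.mp hδ
  simp only [bracket] at hb
  exact Set.mem_biUnion (x := n) (mem_Icc.mpr ⟨by omega, by omega⟩)
    ⟨by linarith, by linarith⟩

lemma abs_dotZ_le_of_mem_cube (k : Fin d → ℤ) {α : EuclideanSpace ℝ (Fin d)}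
    (hα : α ∈ cube d) :
    |dotZ k α| ≤ ∑ i, |k i| := by
  push_cast
  refine (abs_sum_le_sum_abs _ _).trans (sum_le_sum fun i _ => ?_)
  rw [abs_mul]
  exact mul_le_of_le_one_right (abs_nonneg _)
    (abs_le.mpr ⟨by linarith [(hα i).1], (hα i).2.le⟩)

lemma volume_cube_abs_bracket_dotZ_lt_le {k : Fin d → ℤ} (hk : k ≠ 0) {δ : ℝ}
    (hδ : 0 ≤ δ) :
    volume {α | α ∈ cube d ∧ |bracket (dotZ k α)| < δ} ≤ ENNReal.ofReal (6 * d * δ) := by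
  obtain ⟨i, hi⟩ := Function.ne_iff.mp hk
  -- Shearing along a largest coordinate `k i₀` keeps `M := ∑ |k j| ≤ d |k i₀|`.
  obtain ⟨i₀, -, hmax⟩ := exists_max_image univ (fun j => |k j|) ⟨i, mem_univ i⟩
  set M := ∑ j, |k j|
  have ha : 1 ≤ |k i₀| := (Int.one_le_abs hi).trans (hmax i (mem_univ i))
  have hMa : M ≤ d * |k i₀| := by
    simpa using sum_le_sum (s := univ) fun j _ => hmax j (mem_univ j)
  have haM : |k i₀| ≤ M := single_le_sum (fun j _ => abs_nonneg (k j)) (mem_univ i₀)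
  set a := |(k i₀ : ℝ)|
  have ha' : 1 ≤ a := by simp only [a, ← Int.cast_abs]; exact_mod_cast ha
  have hMa' : (M : ℝ) ≤ d * a := by simp only [a, ← Int.cast_abs]; exact_mod_cast hMa
  have haM' : a ≤ M := by simp only [a, ← Int.cast_abs]; exact_mod_cast haM
  have hsub : {α | α ∈ cube d ∧ |bracket (dotZ k α)| < δ} ⊆
      dotShear k i₀ ⁻¹' cubeWithSide i₀ (intNbhd M δ) := by
    rintro α ⟨hα, hb⟩ j -
    rcases eq_or_ne j i₀ with rfl | hj
    · simpa [dotShear_apply_self] using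
        mem_intNbhd_of_abs_bracket_lt (by exact_mod_cast abs_dotZ_le_of_mem_cube k hα) hb
    · simpa [dotShear_apply_of_ne k hj, hj] using hα j
  calc volume {α | α ∈ cube d ∧ |bracket (dotZ k α)| < δ}
      ≤ volume (dotShear k i₀ ⁻¹' cubeWithSide i₀ (intNbhd M δ)) := measure_mono hsub
    _ = ENNReal.ofReal a⁻¹ * volume (intNbhd M δ) := by
        rw [Measure.addHaar_preimage_linearMap _
            (by rw [det_dotShear]; exact_mod_cast abs_pos.mp (one_pos.trans_le ha)),
          det_dotShear, volume_cubeWithSide i₀ (measurableSet_intNbhd M δ), abs_inv]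
    _ ≤ ENNReal.ofReal (a⁻¹ * ((2 * M + 1) * (2 * δ))) := by
        rw [ENNReal.ofReal_mul (by positivity)]
        gcongr
        exact volume_intNbhd_le (by positivity) δ
    _ ≤ ENNReal.ofReal (6 * d * δ) := by
        refine ENNReal.ofReal_le_ofReal ?_
        calc a⁻¹ * ((2 * M + 1) * (2 * δ)) ≤ a⁻¹ * ((3 * (d * a)) * (2 * δ)) := by
              gcongr; linarith
          _ = 6 * d * δ := by field_simp; ring

end CubeMeasure

section BadSet

def badSet (d : ℕ) (s R η : ℝ) : Set (EuclideanSpace ℝ (Fin d)) :=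
  {α | α ∈ cube d ∧ ∃ k : Fin d → ℤ, k ≠ 0 ∧ znorm k < R ∧
    znorm k ^ s * |bracket (dotZ k α)| < η}

variable {d : ℕ} {s : ℝ}

lemma exists_volume_badSet_le (hs : 0 ≤ s) (hsd : s < d) :
    ∃ C : ℝ, 0 ≤ C ∧ ∀ R η : ℝ, 0 ≤ R → 0 ≤ η →
      volume (badSet d s R η) ≤ ENNReal.ofReal (C * (η * R ^ ((d : ℝ) - s))) := by
  obtain ⟨C, hC, hsum⟩ := exists_sum_punctLatticeBall_rpow_neg_le hs hsd
  refine ⟨6 * d * C, by positivity, fun R η hR hη => ?_⟩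
  have hδ : ∀ k : Fin d → ℤ, 0 ≤ η * znorm k ^ (-s) :=
    fun k => mul_nonneg hη (Real.rpow_nonneg (znorm_nonneg k) _)
  have hsub : badSet d s R η ⊆
      ⋃ k ∈ punctLatticeBall d R,
        {α | α ∈ cube d ∧ |bracket (dotZ k α)| < η * znorm k ^ (-s)} := by
    rintro α ⟨hα, k, hk, hkR, hlt⟩
    have hpos : 0 < znorm k ^ s := Real.rpow_pos_of_pos (by linarith [one_le_znorm hk]) s
    refine Set.mem_biUnion (mem_punctLatticeBall.mpr ⟨hk, hkR⟩) ⟨hα, ?_⟩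
    rwa [Real.rpow_neg (znorm_nonneg k), ← div_eq_mul_inv, lt_div_iff₀ hpos, mul_comm]
  calc _ ≤ _ := measure_mono hsub
    _ ≤ ∑ k ∈ punctLatticeBall d R,
          volume {α | α ∈ cube d ∧ |bracket (dotZ k α)| < η * znorm k ^ (-s)} :=
        measure_biUnion_finset_le _ _
    _ ≤ ∑ k ∈ punctLatticeBall d R, ENNReal.ofReal (6 * d * (η * znorm k ^ (-s))) := by
        gcongr with k hk
        exact volume_cube_abs_bracket_dotZ_lt_le (mem_punctLatticeBall.mp hk).1 (hδ k)
    _ = ENNReal.ofReal (6 * d * η * ∑ k ∈ punctLatticeBall d R, znorm k ^ (-s)) := by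
        rw [← ENNReal.ofReal_sum_of_nonneg fun k _ => by have := hδ k; positivity, mul_sum]
        simp only [mul_assoc]
    _ ≤ ENNReal.ofReal (6 * d * C * (η * R ^ ((d : ℝ) - s))) := by
        refine ENNReal.ofReal_le_ofReal ?_
        calc 6 * d * η * ∑ k ∈ punctLatticeBall d R, znorm k ^ (-s)
            ≤ 6 * d * η * (C * R ^ ((d : ℝ) - s)) := by gcongr; exact hsum R hR
          _ = 6 * d * C * (η * R ^ ((d : ℝ) - s)) := by ring

end BadSet

lemma threshold_mul_radius_rpow_le {d : ℕ} (hd : 2 ≤ d) {ε : ℝ} (hε : 0 < ε) (N : ℕ) :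
    ε ^ (-(d : ℝ) / 4) * (N : ℝ) ^ (-(((d : ℝ) - 1) / (2 * (d : ℝ)))) *
      (ε ^ (((d : ℝ) + 4) / (2 * ((d : ℝ) - 1))) * (N : ℝ) ^ ((1 : ℝ) / d)) ^
        ((d : ℝ) - ((d : ℝ) + 1) / 2) ≤ ε := by
  have hd' : (2 : ℝ) ≤ d := by exact_mod_cast hd
  have hd1 : (d : ℝ) - 1 ≠ 0 := by linarith
  set γ := ((d : ℝ) - 1) / (2 * (d : ℝ))
  have hRq : (ε ^ (((d : ℝ) + 4) / (2 * ((d : ℝ) - 1))) * (N : ℝ) ^ ((1 : ℝ) / d)) ^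
      ((d : ℝ) - ((d : ℝ) + 1) / 2) = ε ^ (((d : ℝ) + 4) / 4) * (N : ℝ) ^ γ := by
    rw [Real.mul_rpow (by positivity) (by positivity), ← Real.rpow_mul hε.le,
      ← Real.rpow_mul (Nat.cast_nonneg N)]
    congr 2
    · field_simp; ring
    · simp only [γ]; field_simp; ring
  calc _ = ε ^ (-(d : ℝ) / 4 + ((d : ℝ) + 4) / 4) *
        (((N : ℝ) ^ γ)⁻¹ * (N : ℝ) ^ γ) := by
        rw [hRq, Real.rpow_add hε, Real.rpow_neg (Nat.cast_nonneg N)]; ring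
    _ ≤ ε := by
        rw [show -(d : ℝ) / 4 + ((d : ℝ) + 4) / 4 = 1 by ring, Real.rpow_one]
        exact mul_le_of_le_one_right hε.le inv_mul_le_one

theorem measure_of_bad_alphas
    (d : ℕ) (hd : 2 ≤ d) :
    ∃ Cd : ℝ, ∀ ε : ℝ, ε ∈ Set.Ioo (0:ℝ) 1 → ∀ N : ℕ,
      volume {α : EuclideanSpace ℝ (Fin d) | α ∈ cube d ∧
        ∃ k : Fin d → ℤ, k ≠ 0 ∧
          znorm k ^ 2 < ε ^ (((d:ℝ)+4)/((d:ℝ)-1)) * (N:ℝ) ^ ((2:ℝ)/(d:ℝ)) ∧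
          znorm k ^ (((d:ℝ)+1)/2) * |bracket (dotZ k α)| <
            ε ^ (-(d:ℝ)/4) * (N:ℝ) ^ (-(((d:ℝ)-1)/(2*(d:ℝ))))}
      ≤ ENNReal.ofReal (Cd * ε) := by
  have hd' : (2 : ℝ) ≤ d := by exact_mod_cast hd
  obtain ⟨C, hC, hbad⟩ := exists_volume_badSet_le (d := d)
    (s := ((d : ℝ) + 1) / 2) (by positivity) (by linarith)
  refine ⟨C, fun ε ⟨hε, _⟩ N => ?_⟩
  set R := ε ^ (((d : ℝ) + 4) / (2 * ((d : ℝ) - 1))) * (N : ℝ) ^ ((1 : ℝ) / d)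
  have hR2 : ε ^ (((d:ℝ)+4)/((d:ℝ)-1)) * (N:ℝ) ^ ((2:ℝ)/(d:ℝ)) = R ^ 2 := by
    have hd1 : (d : ℝ) - 1 ≠ 0 := by linarith
    rw [mul_pow, ← Real.rpow_mul_natCast hε.le, ← Real.rpow_mul_natCast (Nat.cast_nonneg N)]
    congr 2 <;> field_simp <;> ring
  set η := ε ^ (-(d : ℝ) / 4) * (N : ℝ) ^ (-(((d : ℝ) - 1) / (2 * (d : ℝ))))
  refine (measure_mono ?_).trans ((hbad R η (by positivity) (by positivity)).trans
    (ENNReal.ofReal_le_ofReal (by gcongr; exact threshold_mul_radius_rpow_le hd hε N)))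
  rintro α ⟨hα, k, hk, hkR, hlt⟩
  exact ⟨hα, k, hk, lt_of_pow_lt_pow_left₀ 2 (by positivity) (hR2 ▸ hkR), hlt⟩

end
end

section
/- Let d ≥ 2 and let C ⊂ ℝ^d be a strictly convex analytic body with 0 in its interior, with support function P(t) = sup_{x∈C}(t,x). Then for every invertible linear map L of ℝ^d, the function f_L : ℝ → ℝ defined by f_L(δ) = P(L(1,δ,0,…,0)) is real-analytic on ℝ and is not a polynomial. -/
open MeasureTheory Filter Pointwise
open scoped ENNReal RealInnerProductSpace Real

noncomputable section

/-- The vector `(u, v, 0, …, 0)` of `ℝ^d`. -/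
def pairVec (d : ℕ) (u v : ℝ) : EuclideanSpace ℝ (Fin d) :=
  (EuclideanSpace.equiv (Fin d) ℝ).symm
    (fun i => if (i : ℕ) = 0 then u else if (i : ℕ) = 1 then v else 0)

/-!
With `a = L (1, 0, …)` and `b = L (0, 1, …)` the section is `δ ↦ P (a + δ • b)`. It is analytic
because the line `δ ↦ a + δ • b` misses `0`, where the support function is analytic. If
`closedBall 0 r ⊆ C ⊆ closedBall 0 R`, then `r ‖t‖ ≤ P t ≤ R ‖t‖`, so the section is squeezed
between `r ‖b‖ |δ| - r ‖a‖` and `R ‖b‖ |δ| + R ‖a‖`. A polynomial of linear growth is affine, and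
an affine function `αδ + β` cannot dominate `m |δ| - c` with `m > 0`: compare `δ` with `-δ`.
-/

open Polynomial Asymptotics

theorem Polynomial.natDegree_le_of_isBigO_pow {q : ℝ[X]} {n : ℕ}
    (h : (fun x => q.eval x) =O[atTop] (· ^ n)) : q.natDegree ≤ n := by
  have hlittle : (fun x => q.eval x) =o[atTop] fun x => (X ^ (n + 1) : ℝ[X]).eval x := by
    simpa using h.trans_isLittleO (isLittleO_pow_pow_atTop_of_lt n.lt_succ_self)
  have hdeg := (div_tendsto_atTop_zero_iff_degree_lt q (X ^ (n + 1))
    (pow_ne_zero (n + 1) X_ne_zero)).1 hlittle.tendsto_div_nhds_zero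
  rw [degree_X_pow] at hdeg
  exact natDegree_le_iff_degree_le.2 (Order.le_of_lt_succ hdeg)

theorem Polynomial.natDegree_le_one_of_abs_eval_le {q : ℝ[X]} {K c : ℝ}
    (h : ∀ x, |q.eval x| ≤ K * |x| + c) : q.natDegree ≤ 1 := by
  refine natDegree_le_of_isBigO_pow (IsBigO.of_bound (|K| + |c|) ?_)
  filter_upwards [eventually_ge_atTop 1] with x hx
  have hx0 : 0 ≤ x := by linarith
  rw [Real.norm_eq_abs, pow_one, Real.norm_eq_abs, abs_of_nonneg hx0]
  calc |q.eval x| ≤ K * |x| + c := h x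
    _ ≤ |K| * x + |c| * x := by
      rw [abs_of_nonneg hx0]
      gcongr
      · exact le_abs_self K
      · nlinarith [le_abs_self c, abs_nonneg c]
    _ = (|K| + |c|) * x := by ring

theorem Polynomial.exists_eval_lt_mul_abs_sub {q : ℝ[X]} (hq : q.natDegree ≤ 1) {m : ℝ}
    (hm : 0 < m) (c : ℝ) : ∃ x, q.eval x < m * |x| - c := by
  by_contra! h
  obtain ⟨x, hx⟩ : ∃ x : ℝ, 2 * q.coeff 0 < 2 * (m * x - c) ∧ 0 ≤ x :=
    ⟨(|q.coeff 0| + |c| + 1) / m, by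
      constructor
      · rw [mul_div_cancel₀ _ hm.ne']; linarith [le_abs_self (q.coeff 0), le_abs_self c]
      · positivity⟩
  have h1 := h x
  have h2 := h (-x)
  rw [eq_X_add_C_of_natDegree_le_one hq] at h1 h2
  simp only [eval_add, eval_mul, eval_C, eval_X, abs_neg, abs_of_nonneg hx.2] at h1 h2
  linarith [hx.1]

theorem not_exists_polynomial_of_linear_growth {f : ℝ → ℝ} {m K c c' : ℝ} (hm : 0 < m)
    (hlow : ∀ x, m * |x| - c ≤ f x) (hup : ∀ x, f x ≤ K * |x| + c') :
    ¬ ∃ q : ℝ[X], ∀ x, f x = q.eval x := by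
  rintro ⟨q, hq⟩
  have hdeg : q.natDegree ≤ 1 := natDegree_le_one_of_abs_eval_le (K := |K|) (c := |c| + |c'|)
    fun x => by
      rw [← hq, abs_le]
      have hKx := mul_le_mul_of_nonneg_right (le_abs_self K) (abs_nonneg x)
      constructor <;> linarith [hlow x, hup x, mul_nonneg hm.le (abs_nonneg x),
        mul_nonneg (abs_nonneg K) (abs_nonneg x), le_abs_self c, le_abs_self c', abs_nonneg c,
        abs_nonneg c']
  obtain ⟨x, hx⟩ := exists_eval_lt_mul_abs_sub hdeg hm c
  exact (hx.trans_le (hlow x)).ne (hq x).symm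

section SupportFunction

variable {d : ℕ} {C : Set (EuclideanSpace ℝ (Fin d))}

theorem suppFn_le_mul_norm {R : ℝ} (hR : ∀ x ∈ C, ‖x‖ ≤ R) (hR0 : 0 ≤ R)
    (t : EuclideanSpace ℝ (Fin d)) : suppFn C t ≤ R * ‖t‖ := by
  refine Real.sSup_le ?_ (by positivity)
  rintro _ ⟨x, hx, rfl⟩
  calc ⟪t, x⟫ ≤ ‖t‖ * ‖x‖ := real_inner_le_norm t x
    _ ≤ R * ‖t‖ := by rw [mul_comm]; exact mul_le_mul_of_nonneg_right (hR x hx) (norm_nonneg t)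

theorem mul_norm_le_suppFn (hC : Bornology.IsBounded C) {r : ℝ} (hr : 0 ≤ r)
    (hball : Metric.closedBall 0 r ⊆ C) (t : EuclideanSpace ℝ (Fin d)) :
    r * ‖t‖ ≤ suppFn C t := by
  obtain ⟨R, hR⟩ := hC.exists_norm_le
  have hbdd : BddAbove ((fun x => ⟪t, x⟫) '' C) :=
    ⟨‖t‖ * R, by
      rintro _ ⟨x, hx, rfl⟩
      exact (real_inner_le_norm t x).trans (mul_le_mul_of_nonneg_left (hR x hx) (norm_nonneg t))⟩
  rcases eq_or_ne t 0 with rfl | ht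
  · refine le_csSup hbdd ⟨0, hball (by simp [hr]), ?_⟩
    simp
  · have hx : (r / ‖t‖) • t ∈ C := hball <| by
      rw [mem_closedBall_zero_iff, norm_smul, Real.norm_eq_abs, abs_div, abs_norm,
        abs_of_nonneg hr, div_mul_cancel₀ _ (norm_ne_zero_iff.2 ht)]
    refine le_csSup hbdd ⟨_, hx, ?_⟩
    simp only [real_inner_smul_right, real_inner_self_eq_norm_sq]
    field_simp

end SupportFunction

section PairVec

variable {d : ℕ}

theorem pairVec_apply (u v : ℝ) (i : Fin d) :
    pairVec d u v i = if (i : ℕ) = 0 then u else if (i : ℕ) = 1 then v else 0 := rfl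

theorem pairVec_one_eq_add_smul (δ : ℝ) :
    pairVec d 1 δ = pairVec d 1 0 + δ • pairVec d 0 1 := by
  ext i
  simp only [PiLp.add_apply, PiLp.smul_apply, smul_eq_mul, pairVec_apply]
  split_ifs <;> simp

theorem pairVec_eq_zero_iff (hd : 2 ≤ d) {u v : ℝ} : pairVec d u v = 0 ↔ u = 0 ∧ v = 0 := by
  refine ⟨fun h => ⟨?_, ?_⟩, fun ⟨hu, hv⟩ => ?_⟩
  · have := congrArg (fun w : EuclideanSpace ℝ (Fin d) => w ⟨0, by omega⟩) h
    simpa [pairVec_apply] using this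
  · have := congrArg (fun w : EuclideanSpace ℝ (Fin d) => w ⟨1, by omega⟩) h
    simpa [pairVec_apply] using this
  · ext i
    simp [pairVec_apply, hu, hv]

end PairVec

theorem support_function_section_analytic_not_polynomial
    (d : ℕ) (hd : 2 ≤ d) (C : StrictlyConvexAnalyticBody d)
    (h0 : (0 : EuclideanSpace ℝ (Fin d)) ∈ interior C.carrier)
    (L : EuclideanSpace ℝ (Fin d) ≃ₗ[ℝ] EuclideanSpace ℝ (Fin d)) :
    (∀ δ : ℝ, AnalyticAt ℝ (fun u : ℝ => suppFn C.carrier (L (pairVec d 1 u))) δ) ∧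
    ¬ ∃ q : Polynomial ℝ, ∀ δ : ℝ, suppFn C.carrier (L (pairVec d 1 δ)) = q.eval δ := by
  set a := L (pairVec d 1 0)
  set b := L (pairVec d 0 1)
  have hline (δ : ℝ) : L (pairVec d 1 δ) = a + δ • b := by
    rw [pairVec_one_eq_add_smul, map_add, map_smul]
  have hne (δ : ℝ) : a + δ • b ≠ 0 := by
    rw [← hline, Ne, L.map_eq_zero_iff, pairVec_eq_zero_iff hd]
    simp
  have hb : b ≠ 0 := by
    rw [Ne, L.map_eq_zero_iff, pairVec_eq_zero_iff hd]
    simp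
  simp only [hline]
  refine ⟨fun δ => (C.analyticSupport _ (hne δ)).comp (f := fun u : ℝ => a + u • b)
    (by fun_prop), ?_⟩
  obtain ⟨R, hR0, hR⟩ := C.isCompact.isBounded.exists_pos_norm_le
  obtain ⟨r, hr0, hr⟩ := Metric.nhds_basis_closedBall.mem_iff.1 (mem_interior_iff_mem_nhds.1 h0)
  refine not_exists_polynomial_of_linear_growth (m := r * ‖b‖) (c := r * ‖a‖) (K := R * ‖b‖)
    (c' := R * ‖a‖) (by positivity) (fun δ => ?_) (fun δ => ?_)
  · calc r * ‖b‖ * |δ| - r * ‖a‖ = r * (‖δ • b‖ - ‖a‖) := by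
          rw [norm_smul, Real.norm_eq_abs]; ring
      _ ≤ r * ‖a + δ • b‖ := by
          gcongr; exact sub_le_iff_le_add.2 (norm_le_add_norm_add' a (δ • b))
      _ ≤ suppFn C.carrier (a + δ • b) := mul_norm_le_suppFn C.isCompact.isBounded hr0.le hr _
  · calc suppFn C.carrier (a + δ • b) ≤ R * ‖a + δ • b‖ := suppFn_le_mul_norm hR hR0.le _
      _ ≤ R * (‖a‖ + ‖δ • b‖) := by gcongr; exact norm_add_le _ _
      _ = R * ‖b‖ * |δ| + R * ‖a‖ := by rw [norm_smul, Real.norm_eq_abs]; ring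

end
end
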